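/- arXiv:2406.15969 — 5 statements merged into one kernel-verified Lean document; each statement's English description precedes it below -/
import Mathlib

section
/- Let V be an n×(n-1) real matrix whose columns extend to an orthogonal basis together with the normalized all-ones vector, i.e., [V, e/√n] is an orthogonal matrix. Define K_V(X) = K(VXVᵀ) for symmetric (n-1)×(n-1) matrices X, where K is the Lindenstrauss operator. Then the composition K_V* ∘ K_V is a positive definite linear operator on the space of symmetric (n-1)×(n-1) matrices; equivalently, K_V(X) = 0 implies X = 0, and ⟨X, K_V*(K_V(X))⟩ = ‖K_V(X)‖²_F > 0 for all X ≠ 0. -/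
/-! With `M = V X Vᵀ`, the conditions on `V` give `M e = 0` and `X = Vᵀ M V`. If `K(M) = 0`
then `M` is the matrix `(d eᵀ + e dᵀ)/2` of its diagonal `d`, and `M e = 0` forces `d = 0`; hence
`K_V` is injective. The trace identity is `K_V* = Vᵀ K*(·) V` combined with `K*` being the adjoint
of `K` on symmetric matrices, and positivity is that of the squared Frobenius norm. -/

open Matrix BigOperators

noncomputable section

/-- The Lindenstrauss operator. -/
def lind {ι : Type*} [Fintype ι] (M : Matrix ι ι ℝ) : Matrix ι ι ℝ :=
  Matrix.of fun i j => M i i + M j j - 2 * M i j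

/-- The adjoint of the Lindenstrauss operator: `K*(D) = 2(Diag(De) - D)`. -/
def lindAdj {ι : Type*} [Fintype ι] [DecidableEq ι] (D : Matrix ι ι ℝ) : Matrix ι ι ℝ :=
  (2 : ℝ) • (Matrix.diagonal (D *ᵥ fun _ => (1 : ℝ)) - D)

namespace Matrix

theorem IsSymm.mul_mul_transpose {m n α : Type*} [Fintype n] [CommSemiring α]
    {X : Matrix n n α} (hX : X.IsSymm) (V : Matrix m n α) : (V * X * Vᵀ).IsSymm := by
  simp only [IsSymm, transpose_mul, transpose_transpose, hX.eq, Matrix.mul_assoc]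

theorem trace_transpose_mul_conj {m n α : Type*} [Fintype m] [Fintype n] [CommSemiring α]
    (X : Matrix n n α) (V : Matrix m n α) (A : Matrix m m α) :
    trace (Xᵀ * (Vᵀ * A * V)) = trace ((V * X * Vᵀ)ᵀ * A) := by
  simp only [transpose_mul, transpose_transpose, Matrix.mul_assoc]
  rw [trace_mul_comm V]
  simp only [Matrix.mul_assoc]

theorem trace_transpose_mul_self_pos {m n : Type*} [Fintype m] [Fintype n] {A : Matrix m n ℝ}
    (hA : A ≠ 0) : 0 < trace (Aᵀ * A) := by
  rw [← conjTranspose_eq_transpose_of_trivial]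
  exact (posSemidef_conjTranspose_mul_self A).trace_nonneg.lt_of_ne'
    (trace_conjTranspose_mul_self_eq_zero_iff.not.mpr hA)

end Matrix

section Lindenstrauss

variable {ι : Type*} [Fintype ι]

theorem lind_isSymm {M : Matrix ι ι ℝ} (hM : M.IsSymm) : (lind M).IsSymm := by
  ext i j
  simp [lind, hM.apply i j, add_comm]

theorem eq_zero_of_lind_eq_zero {M : Matrix ι ι ℝ} (hMe : M *ᵥ (fun _ => (1 : ℝ)) = 0)
    (hM : lind M = 0) : M = 0 := by
  have hentry : ∀ i j, 2 * M i j = M i i + M j j := fun i j => by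
    have := congrFun₂ hM i j
    simp only [lind, of_apply, Matrix.zero_apply] at this
    linarith
  have hdiag : ∀ i, Fintype.card ι * M i i + ∑ j, M j j = 0 := fun i => by
    have hrow : ∑ j, M i j = 0 := by simpa [mulVec, dotProduct] using congrFun hMe i
    calc Fintype.card ι * M i i + ∑ j, M j j = ∑ j, (M i i + M j j) := by
          simp [Finset.sum_add_distrib]
      _ = 2 * ∑ j, M i j := by simp only [Finset.mul_sum, hentry]
      _ = 0 := by rw [hrow, mul_zero]
  ext i j
  have hcard : (Fintype.card ι : ℝ) ≠ 0 := by
    have : Nonempty ι := ⟨i⟩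
    positivity
  have htrace : ∑ k, M k k = 0 := by
    have hsum := Finset.sum_eq_zero (s := Finset.univ) fun k _ => hdiag k
    simp only [Finset.sum_add_distrib, ← Finset.mul_sum, Finset.sum_const, Finset.card_univ,
      nsmul_eq_mul] at hsum
    have : (2 * Fintype.card ι : ℝ) * ∑ k, M k k = 0 := by linarith
    simpa [hcard] using this
  have hzero : ∀ k, M k k = 0 := fun k => by
    simpa [htrace, hcard] using hdiag k
  simpa [hzero] using hentry i j

theorem trace_transpose_mul_lindAdj [DecidableEq ι] (M : Matrix ι ι ℝ) {D : Matrix ι ι ℝ}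
    (hD : D.IsSymm) : trace (Mᵀ * lindAdj D) = trace ((lind M)ᵀ * D) := by
  have hcol : ∀ j, ∑ i, D i j = ∑ i, D j i := fun j => by simp only [hD.apply]
  simp only [trace, diag, mul_apply, transpose_apply, lindAdj, lind, Matrix.smul_apply,
    Matrix.sub_apply, diagonal_apply, mulVec, dotProduct, mul_one, smul_eq_mul, of_apply,
    mul_sub, sub_mul, add_mul, Finset.sum_sub_distrib, Finset.sum_add_distrib, mul_ite, mul_zero,
    Finset.sum_ite_eq', Finset.mem_univ, if_true]
  rw [Finset.sum_comm (f := fun x y => M y y * D y x)]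
  simp only [← Finset.mul_sum, hcol, mul_left_comm _ (2 : ℝ), mul_assoc]
  ring

end Lindenstrauss

/-- `K_V* ∘ K_V` is a positive definite linear operator on symmetric matrices:
`K_V(X) = 0 → X = 0`, and `⟨X, K_V*(K_V X)⟩ = ‖K_V X‖²_F > 0` for `X ≠ 0`. -/
theorem KV_star_KV_posdef (n : ℕ) (V : Matrix (Fin n) (Fin (n - 1)) ℝ)
    (hV : Vᵀ * V = 1) (hVe : Vᵀ *ᵥ (fun _ => (1 : ℝ)) = 0) :
    (∀ X : Matrix (Fin (n - 1)) (Fin (n - 1)) ℝ, X.IsSymm →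
        lind (V * X * Vᵀ) = 0 → X = 0) ∧
    (∀ X : Matrix (Fin (n - 1)) (Fin (n - 1)) ℝ, X.IsSymm → X ≠ 0 →
        Matrix.trace (Xᵀ * (Vᵀ * lindAdj (lind (V * X * Vᵀ)) * V)) =
          Matrix.trace ((lind (V * X * Vᵀ))ᵀ * lind (V * X * Vᵀ)) ∧
        0 < Matrix.trace ((lind (V * X * Vᵀ))ᵀ * lind (V * X * Vᵀ))) := by
  have injective : ∀ X : Matrix (Fin (n - 1)) (Fin (n - 1)) ℝ, lind (V * X * Vᵀ) = 0 → X = 0 := by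
    intro X hX
    have hM : V * X * Vᵀ = 0 :=
      eq_zero_of_lind_eq_zero (by rw [← mulVec_mulVec, hVe, mulVec_zero]) hX
    calc X = Vᵀ * V * X * (Vᵀ * V) := by rw [hV, Matrix.one_mul, Matrix.mul_one]
      _ = Vᵀ * (V * X * Vᵀ) * V := by simp only [Matrix.mul_assoc]
      _ = 0 := by rw [hM, Matrix.mul_zero, Matrix.zero_mul]
  refine ⟨fun X _ => injective X, fun X hX hX0 => ⟨?_, ?_⟩⟩
  · rw [trace_transpose_mul_conj,
      trace_transpose_mul_lindAdj _ (lind_isSymm (hX.mul_mul_transpose V))]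
  · exact trace_transpose_mul_self_pos (mt (injective X) hX0)
end
end

section
/- Let D₀ ∈ E^n be a Euclidean distance matrix, let i < j, α ≠ 0, and D_n = D₀ + α E_{ij} ∉ E^n. Let X₀ = K_V†(D₀) ∈ S^{n-1}_+ be the facially reduced Gram matrix and X̄ = argmin_{X ⪰ 0} ½‖K_V(X) - D_n‖²_F the unique solution of the nearest-EDM problem. Then D₀ = K_V(X̄) (i.e., the nearest EDM to D_n is D₀) if and only if (D₀)_{ij} = 0 and α < 0. -/
open Matrix BigOperators

noncomputable section

/-- `D` is a Euclidean distance matrix: the matrix of squared pairwise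
distances of some points. -/
def IsEDM {n : ℕ} (D : Matrix (Fin n) (Fin n) ℝ) : Prop :=
  ∃ (d : ℕ) (p : Fin n → Fin d → ℝ), ∀ i j, D i j = ∑ t, (p i t - p j t) ^ 2

/-- The unit matrix `E_{ij}`. -/
def unitMat {n : ℕ} (i j : Fin n) : Matrix (Fin n) (Fin n) ℝ :=
  Matrix.single i j 1 + Matrix.single j i 1

/-- Squared Frobenius norm. -/
def frob2 {ι : Type*} [Fintype ι] (A : Matrix ι ι ℝ) : ℝ := Matrix.trace (Aᵀ * A)

/-!
The map `X ↦ lind (V X Vᵀ)` sends the PSD cone onto the EDM cone: an EDM is `lind (Q Qᵀ)` for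
centred points `Q`, and `V Vᵀ = I - 𝟙𝟙ᵀ/n` fixes centred columns. Hence `lind (V X̄ Vᵀ)` is a
nearest EDM to `Dₙ = D₀ + α Eᵢⱼ`. Writing a competitor as `D₀ + M`,
`‖D₀ + M - Dₙ‖² = ‖M‖² - 2α(Mᵢⱼ + Mⱼᵢ) + 2α²`, so `D₀` is nearest iff
`2α(Mᵢⱼ + Mⱼᵢ) ≤ ‖M‖²` for every EDM `D₀ + M`. Growing one distance (`M = s E` with `Eᵢⱼ = 1`)
forces `α ≤ 0`, and shrinking the configuration (`M = -s D₀`) forces `α (D₀)ᵢⱼ ≥ 0`, both to first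
order in `s`. Conversely, if `(D₀)ᵢⱼ = 0` and `α < 0` the cross term is nonnegative for every EDM,
so `D₀` is the only nearest EDM.
-/

open Filter Topology

section Frobenius

variable {ι : Type*} [Fintype ι]

lemma frob2_eq_sum (A : Matrix ι ι ℝ) : frob2 A = ∑ k, ∑ l, A k l ^ 2 := by
  simp only [frob2, trace, diag, mul_apply, transpose_apply, sq]
  exact Finset.sum_comm

lemma frob2_nonneg (A : Matrix ι ι ℝ) : 0 ≤ frob2 A := by
  rw [frob2_eq_sum]; positivity

lemma frob2_eq_zero_iff {A : Matrix ι ι ℝ} : frob2 A = 0 ↔ A = 0 := by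
  rw [frob2, ← conjTranspose_eq_transpose_of_trivial]
  exact trace_conjTranspose_mul_self_eq_zero_iff

lemma frob2_smul (c : ℝ) (A : Matrix ι ι ℝ) : frob2 (c • A) = c ^ 2 * frob2 A := by
  simp only [frob2, transpose_smul, smul_mul_smul_comm, trace_smul, smul_eq_mul, sq]

lemma frob2_sub (A B : Matrix ι ι ℝ) :
    frob2 (A - B) = frob2 A - 2 * ∑ k, ∑ l, A k l * B k l + frob2 B := by
  simp only [frob2_eq_sum, Matrix.sub_apply, sub_sq, Finset.sum_add_distrib,
    Finset.sum_sub_distrib, Finset.mul_sum, mul_assoc]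

end Frobenius

lemma unitMat_apply {n : ℕ} (i j k l : Fin n) :
    unitMat i j k l = (if i = k ∧ j = l then 1 else 0) + (if j = k ∧ i = l then 1 else 0) := by
  simp [unitMat, single]

lemma sum_sum_mul_unitMat {n : ℕ} (M : Matrix (Fin n) (Fin n) ℝ) (i j : Fin n) :
    ∑ k, ∑ l, M k l * unitMat i j k l = M i j + M j i := by
  simp [unitMat_apply, mul_add, Finset.sum_add_distrib, ite_and]

lemma frob2_unitMat {n : ℕ} {i j : Fin n} (hij : i ≠ j) : frob2 (unitMat i j) = 2 := by
  simp only [frob2_eq_sum, sq, sum_sum_mul_unitMat]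
  norm_num [unitMat_apply, hij, hij.symm]

lemma frob2_sub_smul_unitMat {n : ℕ} {i j : Fin n} (hij : i ≠ j)
    (M : Matrix (Fin n) (Fin n) ℝ) (α : ℝ) :
    frob2 (M - α • unitMat i j) = frob2 M - 2 * α * (M i j + M j i) + 2 * α ^ 2 := by
  rw [frob2_sub, frob2_smul, frob2_unitMat hij]
  simp only [Matrix.smul_apply, smul_eq_mul, mul_left_comm _ α, ← Finset.mul_sum,
    sum_sum_mul_unitMat]
  ring

lemma frob2_sub_add_smul_unitMat {n : ℕ} {i j : Fin n} (hij : i ≠ j)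
    (D₀ D : Matrix (Fin n) (Fin n) ℝ) (α : ℝ) :
    frob2 (D - (D₀ + α • unitMat i j))
      = frob2 (D - D₀) - 2 * α * ((D - D₀) i j + (D - D₀) j i) + 2 * α ^ 2 := by
  rw [← frob2_sub_smul_unitMat hij, sub_add_eq_sub_sub]

namespace IsEDM

variable {n : ℕ} {D D' : Matrix (Fin n) (Fin n) ℝ}

lemma nonneg (hD : IsEDM D) (k l : Fin n) : 0 ≤ D k l := by
  obtain ⟨d, p, hp⟩ := hD
  rw [hp]; positivity

lemma apply_comm (hD : IsEDM D) (k l : Fin n) : D k l = D l k := by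
  obtain ⟨d, p, hp⟩ := hD
  simp only [hp, ← neg_sub (p k _), neg_sq]

lemma add (hD : IsEDM D) (hD' : IsEDM D') : IsEDM (D + D') := by
  obtain ⟨d, p, hp⟩ := hD
  obtain ⟨d', p', hp'⟩ := hD'
  refine ⟨d + d', fun k => Fin.append (p k) (p' k), fun k l => ?_⟩
  simp [hp, hp', Fin.sum_univ_add]

lemma smul (hD : IsEDM D) {t : ℝ} (ht : 0 ≤ t) : IsEDM (t • D) := by
  obtain ⟨d, p, hp⟩ := hD
  refine ⟨d, fun k s => √t * p k s, fun k l => ?_⟩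
  simp only [Matrix.smul_apply, hp, smul_eq_mul, Finset.mul_sum, ← mul_sub, mul_pow,
    Real.sq_sqrt ht]

end IsEDM

lemma exists_isEDM_apply_eq_one {n : ℕ} {i j : Fin n} (hij : i ≠ j) :
    ∃ D : Matrix (Fin n) (Fin n) ℝ, IsEDM D ∧ D i j = 1 :=
  ⟨of fun k l => ((if k = j then 1 else 0) - (if l = j then 1 else 0)) ^ 2,
    ⟨1, fun k _ => if k = j then 1 else 0, fun k l => by simp⟩, by simp [hij]⟩

lemma lind_mul_transpose_apply {ι κ : Type*} [Fintype ι] [Fintype κ] (Q : Matrix ι κ ℝ)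
    (k l : ι) : lind (Q * Qᵀ) k l = ∑ t, (Q k t - Q l t) ^ 2 := by
  simp only [lind, of_apply, mul_apply, transpose_apply, Finset.mul_sum, ← Finset.sum_add_distrib,
    ← Finset.sum_sub_distrib]
  exact Finset.sum_congr rfl fun t _ => by ring

lemma isEDM_lind_mul_transpose {n d : ℕ} (Q : Matrix (Fin n) (Fin d) ℝ) :
    IsEDM (lind (Q * Qᵀ)) :=
  ⟨d, Q, lind_mul_transpose_apply Q⟩

lemma isEDM_lind_of_posSemidef {n r : ℕ} (V : Matrix (Fin n) (Fin r) ℝ)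
    {X : Matrix (Fin r) (Fin r) ℝ} (hX : X.PosSemidef) : IsEDM (lind (V * X * Vᵀ)) := by
  obtain ⟨B, rfl⟩ := by
    open scoped MatrixOrder in exact CStarAlgebra.nonneg_iff_eq_star_mul_self.mp hX.nonneg
  have h : V * (star B * B) * Vᵀ = (V * Bᵀ) * (V * Bᵀ)ᵀ := by
    simp only [star_eq_conjTranspose, conjTranspose_eq_transpose_of_trivial, transpose_mul,
      transpose_transpose, Matrix.mul_assoc]
  rw [h]
  exact isEDM_lind_mul_transpose _

section Projection

variable {ι κ : Type*} [Fintype ι] [Fintype κ] [DecidableEq ι] [DecidableEq κ]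

lemma mul_transpose_add_eq_one (V : Matrix ι κ ℝ) (hV : Vᵀ * V = 1)
    (hVe : Vᵀ *ᵥ (fun _ => 1) = 0) (hcard : Fintype.card κ + 1 = Fintype.card ι) :
    V * Vᵀ + (Fintype.card ι : ℝ)⁻¹ • of (fun _ _ => 1) = 1 := by
  set N : ℝ := (Fintype.card ι : ℝ)
  have hN : 0 < N := by simp only [N, ← hcard]; positivity
  set u : Matrix ι Unit ℝ := replicateCol Unit fun _ => (√N)⁻¹
  have hVu : Vᵀ * u = 0 := by
    ext a _
    simpa [u, mul_apply, ← Finset.sum_mul, mulVec, dotProduct] using Or.inl (congrFun hVe a)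
  have huu : uᵀ * u = 1 := by
    ext
    simp [u, mul_apply, ← sq, Real.sq_sqrt hN.le, N, hN.ne']
  -- `[V, u]` is square with orthonormal columns, so its rows are orthonormal too.
  have e : ι ≃ κ ⊕ Unit := Fintype.equivOfCardEq (by simp [hcard])
  have hsq : fromRows Vᵀ uᵀ * fromCols V u = 1 := by
    rw [fromRows_mul_fromCols, hV, hVu, ← transpose_transpose (uᵀ * V), transpose_mul,
      transpose_transpose, hVu, huu, transpose_zero, fromBlocks_one]
  have := (fromCols_mul_fromRows_eq_one_comm e V u Vᵀ uᵀ).mpr hsq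
  rw [fromCols_mul_fromRows] at this
  convert this using 2
  ext
  simp [u, mul_apply, ← sq, Real.sq_sqrt hN.le, N]

lemma mul_transpose_mul_of_sum_eq_zero (V : Matrix ι κ ℝ) (hV : Vᵀ * V = 1)
    (hVe : Vᵀ *ᵥ (fun _ => 1) = 0) (hcard : Fintype.card κ + 1 = Fintype.card ι)
    {τ : Type*} [Fintype τ] {Q : Matrix ι τ ℝ} (hQ : ∀ t, ∑ k, Q k t = 0) :
    V * Vᵀ * Q = Q := by
  have hQ' : (of fun _ _ => 1 : Matrix ι ι ℝ) * Q = 0 := by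
    ext k t
    simp [mul_apply, hQ]
  rw [eq_sub_of_add_eq (mul_transpose_add_eq_one V hV hVe hcard), Matrix.sub_mul, smul_mul, hQ',
    smul_zero, sub_zero, Matrix.one_mul]

end Projection

lemma IsEDM.exists_centered {n : ℕ} {D : Matrix (Fin n) (Fin n) ℝ} (hD : IsEDM D) :
    ∃ (d : ℕ) (Q : Matrix (Fin n) (Fin d) ℝ), (∀ t, ∑ k, Q k t = 0) ∧ lind (Q * Qᵀ) = D := by
  obtain ⟨d, p, hp⟩ := hD
  refine ⟨d, of fun k t => p k t - (n : ℝ)⁻¹ * ∑ a, p a t, fun t => ?_, ?_⟩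
  · rcases n.eq_zero_or_pos with rfl | hn
    · simp
    · simp [Finset.sum_sub_distrib, hn.ne']
  · ext k l
    simp [lind_mul_transpose_apply, hp]

lemma IsEDM.exists_posSemidef {n r : ℕ} {D : Matrix (Fin n) (Fin n) ℝ} (hD : IsEDM D)
    (V : Matrix (Fin n) (Fin r) ℝ) (hV : Vᵀ * V = 1) (hVe : Vᵀ *ᵥ (fun _ => 1) = 0)
    (hr : r + 1 = n) :
    ∃ X : Matrix (Fin r) (Fin r) ℝ, X.PosSemidef ∧ lind (V * X * Vᵀ) = D := by
  obtain ⟨d, Q, hQ, rfl⟩ := hD.exists_centered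
  have hVVQ : V * Vᵀ * Q = Q :=
    mul_transpose_mul_of_sum_eq_zero V hV hVe (by simpa using hr) hQ
  refine ⟨Vᵀ * Q * (Vᵀ * Q)ᵀ, ?_, ?_⟩
  · simpa only [conjTranspose_eq_transpose_of_trivial] using
      posSemidef_self_mul_conjTranspose (Vᵀ * Q)
  · conv_rhs => rw [← hVVQ]
    simp only [transpose_mul, transpose_transpose, Matrix.mul_assoc]

lemma nonpos_of_forall_mul_le_mul_sq {b c : ℝ}
    (h : ∀ s, 0 < s → s ≤ 1 → b * s ≤ c * s ^ 2) : b ≤ 0 := by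
  have hlim : Tendsto (fun s => c * s) (𝓝[>] 0) (𝓝 0) := by
    simpa using tendsto_nhdsWithin_of_tendsto_nhds ((continuous_const_mul c).tendsto 0)
  refine ge_of_tendsto hlim ?_
  filter_upwards [Ioc_mem_nhdsGT zero_lt_one] with s ⟨hs0, hs1⟩
  have := h s hs0 hs1
  rw [sq, ← mul_assoc] at this
  exact le_of_mul_le_mul_right this hs0

def IsNearestEDM {n : ℕ} (Dn D : Matrix (Fin n) (Fin n) ℝ) : Prop :=
  IsEDM D ∧ ∀ D', IsEDM D' → frob2 (D - Dn) ≤ frob2 (D' - Dn)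

lemma isNearestEDM_lind_of_forall_le {n r : ℕ} {Dn : Matrix (Fin n) (Fin n) ℝ}
    (V : Matrix (Fin n) (Fin r) ℝ) (hV : Vᵀ * V = 1) (hVe : Vᵀ *ᵥ (fun _ => 1) = 0)
    (hr : r + 1 = n) {Xbar : Matrix (Fin r) (Fin r) ℝ} (hXbar : Xbar.PosSemidef)
    (hmin : ∀ X : Matrix (Fin r) (Fin r) ℝ, X.PosSemidef →
      frob2 (lind (V * Xbar * Vᵀ) - Dn) ≤ frob2 (lind (V * X * Vᵀ) - Dn)) :
    IsNearestEDM Dn (lind (V * Xbar * Vᵀ)) := by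
  refine ⟨isEDM_lind_of_posSemidef V hXbar, fun D hD => ?_⟩
  obtain ⟨X, hX, rfl⟩ := hD.exists_posSemidef V hV hVe hr
  exact hmin X hX

namespace IsNearestEDM

variable {n : ℕ} {i j : Fin n} {α : ℝ} {D D₀ : Matrix (Fin n) (Fin n) ℝ}

lemma two_mul_le_frob2 (h : IsNearestEDM (D₀ + α • unitMat i j) D₀) (hij : i ≠ j)
    {M : Matrix (Fin n) (Fin n) ℝ} (hM : IsEDM (D₀ + M)) :
    2 * α * (M i j + M j i) ≤ frob2 M := by
  have := h.2 _ hM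
  simp only [frob2_sub_add_smul_unitMat hij, sub_self, add_sub_cancel_left, Matrix.zero_apply,
    frob2_eq_zero_iff.mpr] at this
  linarith

lemma neg_of_ne_zero (h : IsNearestEDM (D₀ + α • unitMat i j) D₀) (hij : i ≠ j) (hα : α ≠ 0) :
    α < 0 := by
  obtain ⟨E, hE, hEij⟩ := exists_isEDM_apply_eq_one hij
  refine hα.lt_of_le ?_
  have := nonpos_of_forall_mul_le_mul_sq (b := 4 * α) (c := frob2 E) fun s hs _ => ?_
  · linarith
  · have := h.two_mul_le_frob2 hij (h.1.add (hE.smul hs.le))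
    simp only [Matrix.smul_apply, smul_eq_mul, hE.apply_comm j i, hEij, frob2_smul] at this
    linarith

lemma apply_eq_zero (h : IsNearestEDM (D₀ + α • unitMat i j) D₀) (hij : i ≠ j) (hα : α < 0) :
    D₀ i j = 0 := by
  refine le_antisymm ?_ (h.1.nonneg i j)
  have := nonpos_of_forall_mul_le_mul_sq (b := -4 * α * D₀ i j) (c := frob2 D₀) fun s _ hs => ?_
  · nlinarith
  · have hM : IsEDM (D₀ + (-s) • D₀) := by
      rw [show D₀ + (-s) • D₀ = (1 - s) • D₀ by module]
      exact h.1.smul (sub_nonneg.mpr hs)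
    have := h.two_mul_le_frob2 hij hM
    simp only [Matrix.smul_apply, smul_eq_mul, h.1.apply_comm j i, frob2_smul, neg_sq] at this
    linarith

lemma eq_of_apply_eq_zero (h : IsNearestEDM (D₀ + α • unitMat i j) D) (hD₀ : IsEDM D₀)
    (hij : i ≠ j) (h0 : D₀ i j = 0) (hα : α < 0) : D = D₀ := by
  have hle := h.2 D₀ hD₀
  simp only [frob2_sub_add_smul_unitMat hij, Matrix.sub_apply, sub_self,
    frob2_eq_zero_iff.mpr, h0, hD₀.apply_comm j i] at hle
  have hij_nonneg := h.1.nonneg i j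
  have hji_nonneg := h.1.nonneg j i
  have hfrob : frob2 (D - D₀) ≤ 0 := by nlinarith
  exact sub_eq_zero.mp (frob2_eq_zero_iff.mp (hfrob.antisymm (frob2_nonneg _)))

end IsNearestEDM

theorem nearest_EDM_characterization_general (n : ℕ) (D₀ : Matrix (Fin n) (Fin n) ℝ)
    (hD₀ : IsEDM D₀) (i j : Fin n) (hij : i < j) (α : ℝ) (hα : α ≠ 0)
    (Dn : Matrix (Fin n) (Fin n) ℝ) (hDn : Dn = D₀ + α • unitMat i j)
    (V : Matrix (Fin n) (Fin (n - 1)) ℝ)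
    (hV : Vᵀ * V = 1) (hVe : Vᵀ *ᵥ (fun _ => (1 : ℝ)) = 0)
    (Xbar : Matrix (Fin (n - 1)) (Fin (n - 1)) ℝ) (hXbar : Xbar.PosSemidef)
    (hmin : ∀ X : Matrix (Fin (n - 1)) (Fin (n - 1)) ℝ, X.PosSemidef →
      frob2 (lind (V * Xbar * Vᵀ) - Dn) ≤ frob2 (lind (V * X * Vᵀ) - Dn)) :
    D₀ = lind (V * Xbar * Vᵀ) ↔ (D₀ i j = 0 ∧ α < 0) := by
  subst hDn
  have hnear := isNearestEDM_lind_of_forall_le V hV hVe (by have := i.pos; omega) hXbar hmin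
  constructor
  · intro h
    rw [← h] at hnear
    have hneg := hnear.neg_of_ne_zero hij.ne hα
    exact ⟨hnear.apply_eq_zero hij.ne hneg, hneg⟩
  · rintro ⟨h0, hneg⟩
    exact (hnear.eq_of_apply_eq_zero hD₀ hij.ne h0 hneg).symm

/-- The nearest-EDM problem recovers `D₀` from the corrupted `D_n = D₀ + α E_{ij}`
if and only if `(D₀)_{ij} = 0` and `α < 0`. -/
theorem nearest_EDM_characterization (n : ℕ) (D₀ : Matrix (Fin n) (Fin n) ℝ)
    (hD₀ : IsEDM D₀) (i j : Fin n) (hij : i < j) (α : ℝ) (hα : α ≠ 0)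
    (Dn : Matrix (Fin n) (Fin n) ℝ) (hDn : Dn = D₀ + α • unitMat i j)
    (hnot : ¬ IsEDM Dn)
    (V : Matrix (Fin n) (Fin (n - 1)) ℝ)
    (hV : Vᵀ * V = 1) (hVe : Vᵀ *ᵥ (fun _ => (1 : ℝ)) = 0)
    (Xbar : Matrix (Fin (n - 1)) (Fin (n - 1)) ℝ) (hXbar : Xbar.PosSemidef)
    (hmin : ∀ X : Matrix (Fin (n - 1)) (Fin (n - 1)) ℝ, X.PosSemidef →
      frob2 (lind (V * Xbar * Vᵀ) - Dn) ≤ frob2 (lind (V * X * Vᵀ) - Dn)) :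
    D₀ = lind (V * Xbar * Vᵀ) ↔ (D₀ i j = 0 ∧ α < 0) :=
  nearest_EDM_characterization_general n D₀ hD₀ i j hij α hα Dn hDn V hV hVe Xbar hXbar hmin
end
end

section
/- For the Lindenstrauss operator K on symmetric n×n matrices, K†(K(S)) = JSJ for every symmetric S, where J = I - (1/n)eeᵀ and K†(D) = -½ J offDiag(D) J. In particular, K† ∘ K is the orthogonal projection onto the centered subspace S^n_C = {X symmetric : Xe = 0}. -/
open Matrix BigOperators

noncomputable section

/-- `offDiag`: orthogonal projection onto hollow matrices. -/
def offDiag {ι : Type*} [Fintype ι] [DecidableEq ι] (M : Matrix ι ι ℝ) : Matrix ι ι ℝ :=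
  Matrix.of fun i j => if i = j then 0 else M i j

def Jmat (ι : Type*) [Fintype ι] [DecidableEq ι] : Matrix ι ι ℝ :=
  (1 : Matrix ι ι ℝ) - (Fintype.card ι : ℝ)⁻¹ • Matrix.of (fun _ _ => (1 : ℝ))

lemma Jmat_apply (n : ℕ) (i j : Fin n) :
    Jmat (Fin n) i j = (if i = j then (1:ℝ) else 0) - (n : ℝ)⁻¹ := by
  simp [Jmat, Matrix.one_apply, Matrix.sub_apply]

lemma sum_J_col (n : ℕ) (j : Fin n) : ∑ k, Jmat (Fin n) k j = 0 := by
  have hn : (0:ℝ) < n := by exact_mod_cast Fin.pos j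
  simp [Jmat_apply, Finset.sum_sub_distrib, Finset.sum_ite_eq,
    mul_inv_cancel₀ (ne_of_gt hn)]

lemma sum_J_row (n : ℕ) (i : Fin n) : ∑ k, Jmat (Fin n) i k = 0 := by
  have hn : (0:ℝ) < n := by exact_mod_cast Fin.pos i
  simp [Jmat_apply, Finset.sum_sub_distrib, Finset.sum_ite_eq',
    mul_inv_cancel₀ (ne_of_gt hn)]

lemma rowconst_mul_J (n : ℕ) (f : Fin n → ℝ) :
    (Matrix.of fun i _ => f i) * Jmat (Fin n) = 0 := by
  ext i j
  simp [Matrix.mul_apply, ← Finset.mul_sum, sum_J_col]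

lemma J_mul_colconst (n : ℕ) (f : Fin n → ℝ) :
    Jmat (Fin n) * (Matrix.of fun _ j => f j) = 0 := by
  ext i j
  simp only [Matrix.mul_apply, Matrix.of_apply, Matrix.zero_apply]
  rw [← Finset.sum_mul, sum_J_row, zero_mul]

/-- `K†(K(S)) = JSJ` for all symmetric `S`; in particular `K† ∘ K` is the
orthogonal projection onto the centered subspace `{X : Xe = 0}`. -/
theorem Kdagger_K_eq_JSJ (n : ℕ) (S : Matrix (Fin n) (Fin n) ℝ) (hS : S.IsSymm) :
    (-(1 / 2 : ℝ)) • (Jmat (Fin n) * offDiag (lind S) * Jmat (Fin n)) =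
      Jmat (Fin n) * S * Jmat (Fin n) ∧
    (S *ᵥ (fun _ => (1 : ℝ)) = 0 → Jmat (Fin n) * S * Jmat (Fin n) = S) := by
  constructor
  · have h1 : offDiag (lind S) = lind S := by
      ext i j
      by_cases h : i = j <;> simp [offDiag, lind, h] <;> ring
    have h2 : lind S = (Matrix.of fun i _ => S i i) + (Matrix.of fun _ j => S j j)
        - (2:ℝ) • S := by
      ext i j
      simp [lind, Matrix.sub_apply, Matrix.add_apply]
    rw [h1, h2]
    rw [Matrix.mul_sub, Matrix.mul_add, Matrix.mul_smul, J_mul_colconst]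
    rw [Matrix.sub_mul, Matrix.add_mul, Matrix.mul_assoc, rowconst_mul_J, Matrix.mul_zero]
    rw [Matrix.smul_mul]
    simp [Matrix.mul_assoc]
  · intro h
    have hrow : ∀ i, ∑ k, S i k = 0 := by
      intro i
      have := congrFun h i
      simpa [Matrix.mulVec, dotProduct] using this
    have hcol : ∀ j, ∑ k, S k j = 0 := by
      intro j
      have : ∀ k, S k j = S j k := by
        intro k
        conv_lhs => rw [← hS]
        rfl
      simp_rw [this]
      exact hrow j
    have hJS : Jmat (Fin n) * S = S := by
      ext i j
      simp only [Matrix.mul_apply, Jmat_apply]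
      simp [sub_mul, Finset.sum_sub_distrib, Finset.sum_ite_eq, ← Finset.mul_sum, hcol j]
    have hSJ : S * Jmat (Fin n) = S := by
      ext i j
      simp only [Matrix.mul_apply, Jmat_apply]
      simp [mul_sub, Finset.sum_sub_distrib, Finset.sum_ite_eq', ← Finset.sum_mul, hrow i]
    rw [hJS, hSJ]
end
end

section
/- Let G ∈ S^n_+ ∩ S^n_C be a centered (Ge = 0) Gram matrix of rank d with EDM D = K(G), so D has embedding dimension d. Let Z be a maximum rank centered exposing vector: Z ⪰ 0, GZ = 0, Ze = 0, and G + Z + eeᵀ ≻ 0. Then for any full rank factorization Z = NNᵀ, the columns of N form a basis of the Gale space gal(D) = Null([Gᵀ, e]ᵀ) (the null space of the (n+1)×n matrix obtained by stacking G on eᵀ). Conversely, if N is a Gale matrix of D (its columns form a basis of gal(D)), then Z = NNᵀ is a maximum rank centered exposing vector of G. -/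
/-! Since `GZ = 0` and `Ze = 0`, the matrix `M = G + Z + eeᵀ` commutes with `Z`, and a vector `x`
of the Gale space satisfies `Mx = Zx`; hence `x = ZM⁻¹x` lies in the range of `Z = NNᵀ`, which is
the range of `N`. Conversely `GN = 0` and `Nᵀe = 0` put the range of `N` inside the Gale space.
For a Gale matrix `N`, the Gale space is the kernel of `G + eeᵀ`, and a vector `x = Nc` in it
with `NNᵀx = 0` has `‖x‖² = cᵀNᵀx = 0`; so the positive semidefinite matrices `G + eeᵀ` and
`NNᵀ` have trivially intersecting kernels, and their sum is positive definite. -/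

open Matrix BigOperators

noncomputable section

/-- Gale space membership: `x ∈ Null([G; eᵀ])`. -/
def inGaleSpace {n : ℕ} (G : Matrix (Fin n) (Fin n) ℝ) (x : Fin n → ℝ) : Prop :=
  G *ᵥ x = 0 ∧ ∑ i, x i = 0

namespace Matrix

variable {ι : Type*} [Fintype ι]

section PosSemidef

open scoped ComplexOrder

variable {𝕜 : Type*} [RCLike 𝕜] {A B : Matrix ι ι 𝕜}

theorem PosSemidef.add_mulVec_eq_zero_iff (hA : A.PosSemidef) (hB : B.PosSemidef) (x : ι → 𝕜) :
    (A + B) *ᵥ x = 0 ↔ A *ᵥ x = 0 ∧ B *ᵥ x = 0 := by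
  rw [← (hA.add hB).dotProduct_mulVec_zero_iff, ← hA.dotProduct_mulVec_zero_iff,
    ← hB.dotProduct_mulVec_zero_iff, add_mulVec, dotProduct_add]
  exact add_eq_zero_iff_of_nonneg (hA.dotProduct_mulVec_nonneg x) (hB.dotProduct_mulVec_nonneg x)

theorem PosSemidef.posDef_add_of_ker_trivial [DecidableEq ι] (hA : A.PosSemidef)
    (hB : B.PosSemidef) (h : ∀ x, A *ᵥ x = 0 → B *ᵥ x = 0 → x = 0) : (A + B).PosDef := by
  refine (hA.add hB).posDef_iff_isUnit.mpr <| mulVec_injective_iff_isUnit.mp <|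
    (injective_iff_map_eq_zero (A + B).mulVecLin).mpr fun x hx => ?_
  obtain ⟨hAx, hBx⟩ := (hA.add_mulVec_eq_zero_iff hB x).mp hx
  exact h x hAx hBx

end PosSemidef

theorem IsHermitian.commute_of_mul_eq_zero {R : Type*} [Semiring R] [StarRing R]
    {A B : Matrix ι ι R} (hA : A.IsHermitian) (hB : B.IsHermitian) (h : A * B = 0) :
    Commute A B := by
  have hBA : B * A = 0 := by rw [← hA.eq, ← hB.eq, ← conjTranspose_mul, h, conjTranspose_zero]
  exact h.trans hBA.symm

theorem exists_eq_mulVec_of_commute_of_mulVec_eq {R : Type*} [CommRing R] [DecidableEq ι]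
    {M Z : Matrix ι ι R} (hM : IsUnit M) (hMZ : Commute M Z) {x : ι → R}
    (hx : M *ᵥ x = Z *ᵥ x) : ∃ y, x = Z *ᵥ y := by
  obtain ⟨u, rfl⟩ := hM
  refine ⟨(↑u⁻¹ : Matrix ι ι R) *ᵥ x, ?_⟩
  rw [mulVec_mulVec, ← hMZ.units_inv_left.eq, ← mulVec_mulVec, ← hx, mulVec_mulVec,
    u.inv_mul, one_mulVec]

theorem eq_zero_of_eq_mulVec_of_transpose_mulVec_eq_zero {κ : Type*} [Fintype κ]
    {N : Matrix ι κ ℝ} {x : ι → ℝ} {c : κ → ℝ} (hx : x = N *ᵥ c) (hNx : Nᵀ *ᵥ x = 0) :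
    x = 0 := by
  refine dotProduct_self_eq_zero.mp ?_
  nth_rewrite 2 [hx]
  rw [dotProduct_mulVec, ← mulVec_transpose, hNx, zero_dotProduct]

section AllOnes

theorem of_one_mulVec_eq_zero_iff {R : Type*} [Semiring R] {x : ι → R} :
    (of fun _ _ => 1 : Matrix ι ι R) *ᵥ x = 0 ↔ ∑ i, x i = 0 := by
  have hJx : (of fun _ _ => 1 : Matrix ι ι R) *ᵥ x = fun _ => ∑ i, x i := by
    ext; simp [mulVec, dotProduct]
  rw [hJx]
  constructor
  · intro h
    rcases isEmpty_or_nonempty ι with _ | ⟨⟨i⟩⟩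
    · exact Finset.sum_of_isEmpty _
    · exact congrFun h i
  · exact fun h => funext fun _ => h

theorem mul_of_one_eq_zero {R : Type*} [Semiring R] {Z : Matrix ι ι R} (hZ : Z *ᵥ 1 = 0) :
    Z * of (fun _ _ => (1 : R)) = 0 := by
  ext i j
  simpa [mul_apply, mulVec, dotProduct] using congrFun hZ i

theorem posSemidef_of_one {R : Type*} [CommRing R] [PartialOrder R] [StarRing R]
    [StarOrderedRing R] : (of fun _ _ => (1 : R) : Matrix ι ι R).PosSemidef := by
  convert posSemidef_vecMulVec_self_star (1 : ι → R)
  ext; simp [vecMulVec]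

end AllOnes

end Matrix

section Gale

variable {n : ℕ} {G : Matrix (Fin n) (Fin n) ℝ} {κ : Type*} [Fintype κ] {N : Matrix (Fin n) κ ℝ}

theorem inGaleSpace_iff_mulVec_eq_zero (hG : G.PosSemidef) {x : Fin n → ℝ} :
    inGaleSpace G x ↔ (G + of fun _ _ => 1) *ᵥ x = 0 := by
  rw [hG.add_mulVec_eq_zero_iff posSemidef_of_one, of_one_mulVec_eq_zero_iff]
  rfl

theorem forall_inGaleSpace_mulVec_iff :
    (∀ c, inGaleSpace G (N *ᵥ c)) ↔ G * N = 0 ∧ Nᵀ *ᵥ 1 = 0 := by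
  have hsum (c : κ → ℝ) : ∑ i, (N *ᵥ c) i = (Nᵀ *ᵥ 1) ⬝ᵥ c := by
    rw [← one_dotProduct, dotProduct_mulVec, mulVec_transpose]
  simp only [inGaleSpace, mulVec_mulVec, hsum, forall_and, dotProduct_eq_zero_iff]
  rw [ext_iff_mulVec]
  simp only [zero_mulVec]

structure IsMaxRankCenteredExposer (G Z : Matrix (Fin n) (Fin n) ℝ) : Prop where
  posSemidef : Z.PosSemidef
  mul_eq_zero : G * Z = 0
  mulVec_one : Z *ᵥ 1 = 0
  posDef_add : (G + Z + of fun _ _ => 1).PosDef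

theorem IsMaxRankCenteredExposer.inGaleSpace_iff {Z : Matrix (Fin n) (Fin n) ℝ}
    (hG : G.IsHermitian) (hZ : IsMaxRankCenteredExposer G Z) (hZN : Z = N * Nᵀ)
    (x : Fin n → ℝ) : inGaleSpace G x ↔ ∃ c, x = N *ᵥ c := by
  rw [← conjTranspose_eq_transpose_of_trivial] at hZN
  have hGN : G * N = 0 := (mul_self_mul_conjTranspose_eq_zero N G).mp (hZN ▸ hZ.mul_eq_zero)
  have hNe : Nᵀ *ᵥ 1 = 0 := by
    rw [← conjTranspose_eq_transpose_of_trivial]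
    exact (self_mul_conjTranspose_mulVec_eq_zero N 1).mp (hZN ▸ hZ.mulVec_one)
  refine ⟨fun hx => ?_, ?_⟩
  · have hZ' := hZ.posSemidef.isHermitian
    have hcomm : Commute (G + Z + of fun _ _ => 1) Z :=
      ((hG.commute_of_mul_eq_zero hZ' hZ.mul_eq_zero).add_left (Commute.refl Z)).add_left
        (hZ'.commute_of_mul_eq_zero posSemidef_of_one.isHermitian
          (mul_of_one_eq_zero hZ.mulVec_one)).symm
    have hMx : (G + Z + of fun _ _ => 1) *ᵥ x = Z *ᵥ x := by
      rw [add_mulVec, add_mulVec, hx.1, of_one_mulVec_eq_zero_iff.mpr hx.2, zero_add, add_zero]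
    obtain ⟨y, rfl⟩ := exists_eq_mulVec_of_commute_of_mulVec_eq hZ.posDef_add.isUnit hcomm hMx
    exact ⟨Nᴴ *ᵥ y, by rw [hZN, mulVec_mulVec]⟩
  · rintro ⟨c, rfl⟩
    exact forall_inGaleSpace_mulVec_iff.mpr ⟨hGN, hNe⟩ c

theorem isMaxRankCenteredExposer_mul_transpose (hG : G.PosSemidef)
    (hN : ∀ x, inGaleSpace G x ↔ ∃ c, x = N *ᵥ c) : IsMaxRankCenteredExposer G (N * Nᵀ) := by
  obtain ⟨hGN, hNe⟩ := forall_inGaleSpace_mulVec_iff.mp fun c => (hN _).mpr ⟨c, rfl⟩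
  have hNN : (N * Nᵀ).PosSemidef := by
    simpa only [conjTranspose_eq_transpose_of_trivial] using posSemidef_self_mul_conjTranspose N
  refine ⟨hNN, by rw [← Matrix.mul_assoc, hGN, Matrix.zero_mul],
    by rw [← mulVec_mulVec, hNe, mulVec_zero], ?_⟩
  rw [add_right_comm]
  refine (hG.add posSemidef_of_one).posDef_add_of_ker_trivial hNN fun x hGx hNx => ?_
  obtain ⟨c, hc⟩ := (hN x).mp ((inGaleSpace_iff_mulVec_eq_zero hG).mpr hGx)
  refine eq_zero_of_eq_mulVec_of_transpose_mulVec_eq_zero hc ?_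
  rw [← conjTranspose_eq_transpose_of_trivial] at hNx ⊢
  exact (self_mul_conjTranspose_mulVec_eq_zero N x).mp hNx

end Gale

theorem exposing_vector_iff_gale_general (n d : ℕ)
    (G : Matrix (Fin n) (Fin n) ℝ) (hG : G.PosSemidef)
    (Z : Matrix (Fin n) (Fin n) ℝ)
    (hZ : Z.PosSemidef) (hGZ : G * Z = 0) (hZe : Z *ᵥ (fun _ => (1 : ℝ)) = 0)
    (hmax : (G + Z + Matrix.of (fun _ _ => (1 : ℝ))).PosDef) :
    -- full rank factorizations of Z are Gale matrices
    (∀ N : Matrix (Fin n) (Fin (n - d - 1)) ℝ, N.rank = n - d - 1 → Z = N * Nᵀ →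
      ∀ x : Fin n → ℝ, inGaleSpace G x ↔ ∃ c : Fin (n - d - 1) → ℝ, x = N *ᵥ c) ∧
    -- conversely, a Gale matrix yields a maximum-rank centered exposing vector
    (∀ N : Matrix (Fin n) (Fin (n - d - 1)) ℝ, N.rank = n - d - 1 →
      (∀ x : Fin n → ℝ, inGaleSpace G x ↔ ∃ c : Fin (n - d - 1) → ℝ, x = N *ᵥ c) →
      ((N * Nᵀ).PosSemidef ∧ G * (N * Nᵀ) = 0 ∧
        (N * Nᵀ) *ᵥ (fun _ => (1 : ℝ)) = 0 ∧
        (G + N * Nᵀ + Matrix.of (fun _ _ => (1 : ℝ))).PosDef)) := by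
  have hexp : IsMaxRankCenteredExposer G Z := ⟨hZ, hGZ, hZe, hmax⟩
  refine ⟨fun N _ hZN => hexp.inGaleSpace_iff hG.isHermitian hZN, fun N _ hN => ?_⟩
  have hexpN := isMaxRankCenteredExposer_mul_transpose hG hN
  exact ⟨hexpN.posSemidef, hexpN.mul_eq_zero, hexpN.mulVec_one, hexpN.posDef_add⟩

/-- Equivalence between maximum-rank centered exposing vectors of a centered
Gram matrix `G` and Gale matrices of the corresponding EDM: any full rank
factorization `Z = NNᵀ` of such an exposing vector yields a Gale matrix, and
conversely `Z = NNᵀ` built from a Gale matrix is a maximum-rank centered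
exposing vector. -/
theorem exposing_vector_iff_gale (n d : ℕ) (hdn : d + 1 ≤ n)
    (G : Matrix (Fin n) (Fin n) ℝ) (hG : G.PosSemidef)
    (hGe : G *ᵥ (fun _ => (1 : ℝ)) = 0) (hrank : G.rank = d)
    (Z : Matrix (Fin n) (Fin n) ℝ)
    (hZ : Z.PosSemidef) (hGZ : G * Z = 0) (hZe : Z *ᵥ (fun _ => (1 : ℝ)) = 0)
    (hmax : (G + Z + Matrix.of (fun _ _ => (1 : ℝ))).PosDef) :
    -- full rank factorizations of Z are Gale matrices
    (∀ N : Matrix (Fin n) (Fin (n - d - 1)) ℝ, N.rank = n - d - 1 → Z = N * Nᵀ →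
      ∀ x : Fin n → ℝ, inGaleSpace G x ↔ ∃ c : Fin (n - d - 1) → ℝ, x = N *ᵥ c) ∧
    -- conversely, a Gale matrix yields a maximum-rank centered exposing vector
    (∀ N : Matrix (Fin n) (Fin (n - d - 1)) ℝ, N.rank = n - d - 1 →
      (∀ x : Fin n → ℝ, inGaleSpace G x ↔ ∃ c : Fin (n - d - 1) → ℝ, x = N *ᵥ c) →
      ((N * Nᵀ).PosSemidef ∧ G * (N * Nᵀ) = 0 ∧
        (N * Nᵀ) *ᵥ (fun _ => (1 : ℝ)) = 0 ∧
        (G + N * Nᵀ + Matrix.of (fun _ _ => (1 : ℝ))).PosDef)) :=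
  exposing_vector_iff_gale_general n d G hG Z hZ hGZ hZe hmax
end
end

section
/- Let i < j in [n], E_{ij} = e_ie_jᵀ + e_je_iᵀ, and G_E = K†(E_{ij}) = -½ J E_{ij} J with J = I - (1/n)eeᵀ. Then G_E has exactly two nonzero eigenvalues: the vectors e_{ij} = e_i - e_j and e_{ijc} = (2/n)e - (e_i + e_j) are orthogonal eigenvectors of G_E with eigenvalues 1/2 and (2-n)/(2n) respectively, and all other eigenvalues are 0. -/
open Matrix BigOperators

noncomputable section

namespace Matrix

section RankTwo

variable {ι K : Type*} [Fintype ι] [Field K] {a b : ι → K}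

lemma smul_vecMulVec_self_add_smul_vecMulVec_self_mulVec (c d : K) (x : ι → K) :
    (c • vecMulVec a a + d • vecMulVec b b) *ᵥ x = (c * (a ⬝ᵥ x)) • a + (d * (b ⬝ᵥ x)) • b := by
  simp only [add_mulVec, smul_mulVec, vecMulVec_mulVec, op_smul_eq_smul, smul_smul]

lemma smul_vecMulVec_self_add_smul_vecMulVec_self_mulVec_left (hab : a ⬝ᵥ b = 0) (c d : K) :
    (c • vecMulVec a a + d • vecMulVec b b) *ᵥ a = (c * (a ⬝ᵥ a)) • a := by
  rw [smul_vecMulVec_self_add_smul_vecMulVec_self_mulVec, dotProduct_comm b, hab, mul_zero,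
    zero_smul, add_zero]

lemma smul_vecMulVec_self_add_smul_vecMulVec_self_mulVec_right (hab : a ⬝ᵥ b = 0) (c d : K) :
    (c • vecMulVec a a + d • vecMulVec b b) *ᵥ b = (d * (b ⬝ᵥ b)) • b := by
  rw [smul_vecMulVec_self_add_smul_vecMulVec_self_mulVec, hab, mul_zero, zero_smul, zero_add]

lemma linearIndependent_pair_of_dotProduct_eq_zero (hab : a ⬝ᵥ b = 0) (ha : a ⬝ᵥ a ≠ 0)
    (hb : b ⬝ᵥ b ≠ 0) : LinearIndependent K ![a, b] := by
  refine LinearIndependent.pair_iff.2 fun s t hst => ⟨?_, ?_⟩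
  · have := congrArg (a ⬝ᵥ ·) hst
    simp only [dotProduct_add, dotProduct_smul, hab, smul_eq_mul, mul_zero, add_zero,
      dotProduct_zero] at this
    exact (mul_eq_zero.1 this).resolve_right ha
  · have := congrArg (b ⬝ᵥ ·) hst
    simp only [dotProduct_add, dotProduct_smul, dotProduct_comm b a, hab, smul_eq_mul, mul_zero,
      zero_add, dotProduct_zero] at this
    exact (mul_eq_zero.1 this).resolve_right hb

lemma range_smul_vecMulVec_self_add_smul_vecMulVec_self (hab : a ⬝ᵥ b = 0) {c d : K}
    (ha : c * (a ⬝ᵥ a) ≠ 0) (hb : d * (b ⬝ᵥ b) ≠ 0) :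
    LinearMap.range (c • vecMulVec a a + d • vecMulVec b b).mulVecLin =
      Submodule.span K {a, b} := by
  apply le_antisymm
  · rintro v ⟨x, rfl⟩
    rw [mulVecLin_apply, smul_vecMulVec_self_add_smul_vecMulVec_self_mulVec]
    exact Submodule.mem_span_pair.2 ⟨_, _, rfl⟩
  · rw [Submodule.span_le, Set.insert_subset_iff, Set.singleton_subset_iff]
    constructor
    · refine ⟨(c * (a ⬝ᵥ a))⁻¹ • a, ?_⟩
      rw [mulVecLin_apply, mulVec_smul,
        smul_vecMulVec_self_add_smul_vecMulVec_self_mulVec_left hab, smul_smul,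
        inv_mul_cancel₀ ha, one_smul]
    · refine ⟨(d * (b ⬝ᵥ b))⁻¹ • b, ?_⟩
      rw [mulVecLin_apply, mulVec_smul,
        smul_vecMulVec_self_add_smul_vecMulVec_self_mulVec_right hab, smul_smul,
        inv_mul_cancel₀ hb, one_smul]

lemma rank_smul_vecMulVec_self_add_smul_vecMulVec_self (hab : a ⬝ᵥ b = 0) {c d : K}
    (ha : c * (a ⬝ᵥ a) ≠ 0) (hb : d * (b ⬝ᵥ b) ≠ 0) :
    (c • vecMulVec a a + d • vecMulVec b b).rank = 2 := by
  rw [rank, range_smul_vecMulVec_self_add_smul_vecMulVec_self hab ha hb,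
    ← range_cons_cons_empty a b ![], finrank_span_eq_card
      (linearIndependent_pair_of_dotProduct_eq_zero hab (right_ne_zero_of_mul ha)
        (right_ne_zero_of_mul hb)), Fintype.card_fin]

end RankTwo

end Matrix

section Centering

variable {ι : Type*} [Fintype ι] [DecidableEq ι]

lemma Jmat_transpose : (Jmat ι)ᵀ = Jmat ι := by
  ext s t
  simp [Jmat, one_apply, eq_comm]

lemma Jmat_mulVec_single (i : ι) :
    Jmat ι *ᵥ Pi.single i 1 = Pi.single i 1 - (Fintype.card ι : ℝ)⁻¹ • 1 := by
  ext t
  simp [Jmat, one_apply, Pi.single_apply]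

lemma Jmat_mul_single_mul_Jmat (i j : ι) :
    Jmat ι * single i j 1 * Jmat ι =
      vecMulVec (Jmat ι *ᵥ Pi.single i 1) (Jmat ι *ᵥ Pi.single j 1) := by
  rw [single_eq_single_vecMulVec_single, mul_vecMulVec, vecMulVec_mul, ← mulVec_transpose,
    Jmat_transpose]

end Centering

lemma neg_half_smul_Jmat_mul_unitMat_mul_Jmat {n : ℕ} (i j : Fin n) :
    (-(1 / 2 : ℝ)) • (Jmat (Fin n) * unitMat i j * Jmat (Fin n)) =
      (1 / 4 : ℝ) • vecMulVec (Pi.single i 1 - Pi.single j 1) (Pi.single i 1 - Pi.single j 1) +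
      (-(1 / 4) : ℝ) • vecMulVec ((2 / n : ℝ) • 1 - (Pi.single i 1 + Pi.single j 1))
        ((2 / n : ℝ) • 1 - (Pi.single i 1 + Pi.single j 1)) := by
  rw [unitMat, mul_add, add_mul, Jmat_mul_single_mul_Jmat, Jmat_mul_single_mul_Jmat]
  set u := Jmat (Fin n) *ᵥ Pi.single i 1
  set v := Jmat (Fin n) *ᵥ Pi.single j 1
  have h_sub : u - v = Pi.single i 1 - Pi.single j 1 := by
    simp only [u, v, Jmat_mulVec_single]; abel
  have h_add : (2 / n : ℝ) • 1 - (Pi.single i 1 + Pi.single j 1) = -(u + v) := by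
    simp only [u, v, Jmat_mulVec_single, Fintype.card_fin]; module
  rw [← h_sub, h_add]
  ext s t
  simp only [Matrix.smul_apply, Matrix.add_apply, vecMulVec_apply, Pi.add_apply, Pi.sub_apply,
    Pi.neg_apply, smul_eq_mul]
  ring

/-- Eigenstructure of `G_E = K†(E_{ij}) = -½ J E_{ij} J`: the orthogonal
vectors `e_i - e_j` and `(2/n)e - (e_i + e_j)` are eigenvectors with
eigenvalues `1/2` and `(2-n)/(2n)`, and all other eigenvalues are `0`
(the rank is `2`). -/
theorem eigen_Kdagger_unitMat (n : ℕ) (hn : 3 ≤ n) (i j : Fin n) (hij : i < j)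
    (GE : Matrix (Fin n) (Fin n) ℝ)
    (hGE : GE = (-(1 / 2 : ℝ)) • (Jmat (Fin n) * unitMat i j * Jmat (Fin n)))
    (eij eijc : Fin n → ℝ)
    (heij : eij = (fun t => (if t = i then (1:ℝ) else 0) - (if t = j then 1 else 0)))
    (heijc : eijc = (fun t => (2 / (n : ℝ)) -
      ((if t = i then (1:ℝ) else 0) + (if t = j then 1 else 0)))) :
    GE *ᵥ eij = (1 / 2 : ℝ) • eij ∧
    GE *ᵥ eijc = (((2 : ℝ) - n) / (2 * n)) • eijc ∧
    ∑ t, eij t * eijc t = 0 ∧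
    GE.rank = 2 := by
  have hne : i ≠ j := hij.ne
  obtain rfl : eij = Pi.single i 1 - Pi.single j 1 := by
    ext t; simp [heij, Pi.single_apply]
  obtain rfl : eijc = (2 / n : ℝ) • 1 - (Pi.single i 1 + Pi.single j 1) := by
    ext t; simp [heijc, Pi.single_apply]
  set a : Fin n → ℝ := Pi.single i 1 - Pi.single j 1
  set b : Fin n → ℝ := (2 / n : ℝ) • 1 - (Pi.single i 1 + Pi.single j 1)
  have h_aa : a ⬝ᵥ a = 2 := by
    norm_num [a, dotProduct_sub, hne, hne.symm]
  have h_ab : a ⬝ᵥ b = 0 := by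
    simp [a, b, dotProduct_sub, dotProduct_add, hne, hne.symm]
  have h_bb : b ⬝ᵥ b = 2 * (n - 2) / n := by
    simp only [b, dotProduct_sub, sub_dotProduct, dotProduct_add, add_dotProduct, dotProduct_smul,
      smul_dotProduct, one_dotProduct_one, single_dotProduct, dotProduct_single, Pi.one_apply,
      Pi.single_eq_same, Pi.single_eq_of_ne hne, Pi.single_eq_of_ne hne.symm, Fintype.card_fin,
      smul_eq_mul, Pi.sub_apply, Pi.add_apply, Pi.smul_apply]
    field_simp; ring
  rw [hGE, neg_half_smul_Jmat_mul_unitMat_mul_Jmat]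
  refine ⟨?_, ?_, h_ab, ?_⟩
  · rw [smul_vecMulVec_self_add_smul_vecMulVec_self_mulVec_left h_ab, h_aa]; norm_num
  · rw [smul_vecMulVec_self_add_smul_vecMulVec_self_mulVec_right h_ab, h_bb]
    congr 1; field_simp; ring
  · have hn2 : (n : ℝ) - 2 ≠ 0 := by
      have : (3 : ℝ) ≤ n := by exact_mod_cast hn
      linarith
    exact rank_smul_vecMulVec_self_add_smul_vecMulVec_self h_ab (by rw [h_aa]; norm_num)
      (by rw [h_bb]; positivity)
end
end
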